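/- The boundary value problem u'''(t) = -(1/36)(u'(t))² + (1/24)u(t)u''(t) + t²/4 - 6 on (0,1) with u(0)=u'(0)=u''(1)=0 has a unique solution with 0 ≤ u(t) ≤ 2.5, 0 ≤ u'(t) ≤ 3.75, |u''(t)| ≤ 7.5 on [0,1]. -/

import Mathlib

/-- `u` solves the ODE of Example 4.2.1 on `(0,1)` with `u(0)=u'(0)=u''(1)=0`. -/
def IsSolution (u : ℝ → ℝ) : Prop :=
  ContDiff ℝ 2 u ∧
  (∀ t ∈ Set.Ioo (0:ℝ) 1,
    HasDerivAt (deriv (deriv u))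
      (-(1 / 36) * (deriv u t) ^ 2 + (1 / 24) * u t * deriv (deriv u) t +
        t ^ 2 / 4 - 6) t) ∧
  u 0 = 0 ∧ deriv u 0 = 0 ∧ deriv (deriv u) 1 = 0

/-- bounds of Example 4.2.1. -/
def InBounds (u : ℝ → ℝ) : Prop :=
  ∀ t ∈ Set.Icc (0:ℝ) 1,
    u t ∈ Set.Icc 0 (2.5 : ℝ) ∧ deriv u t ∈ Set.Icc 0 (3.75 : ℝ) ∧
      |deriv (deriv u) t| ≤ (7.5 : ℝ)

/-!
Two solutions `u`, `v` within the bounds differ by `w = v - u` with `w(0) = w'(0) = w''(1) = 0`,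
and on the bounded region the right-hand side `f(t, x, x', x'')` is Lipschitz with constants
`L₀ = 7.5/24`, `L₁ = 7.5/36`, `L₂ = 2.5/24`. With `M = max |w''|` on `[0,1]`, the mean value
theorem gives `|w'|, |w| ≤ M`, hence `|w'''| ≤ (L₀ + L₁ + L₂) M = 5/8 M`, and going back from
`w''(1) = 0` gives `M ≤ 5/8 M`, so `M = 0`. Existence is witnessed by `u(t) = 3t² - t³`.
-/

open Set

theorem abs_sub_le_of_abs_hasDerivAt_le {f f' : ℝ → ℝ} {a b C : ℝ} (hab : a ≤ b)
    (hf : ContinuousOn f (Icc a b)) (hf' : ∀ x ∈ Ioo a b, HasDerivAt f (f' x) x)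
    (hC : ∀ x ∈ Ioo a b, |f' x| ≤ C) : |f b - f a| ≤ C * (b - a) := by
  rcases hab.eq_or_lt with rfl | hab
  · simp
  obtain ⟨c, hc, hslope⟩ := exists_hasDerivAt_eq_slope f f' hab hf hf'
  have hba : 0 < b - a := sub_pos.mpr hab
  calc |f b - f a| = |f' c| * (b - a) := by
        rw [hslope, abs_div, abs_of_pos hba, div_mul_cancel₀ _ hba.ne']
    _ ≤ C * (b - a) := by gcongr; exact hC c hc

theorem abs_le_of_abs_hasDerivAt_le_of_eq_zero {f f' : ℝ → ℝ} {C : ℝ}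
    (hf : ContinuousOn f (Icc 0 1)) (hf' : ∀ x ∈ Ioo 0 1, HasDerivAt f (f' x) x)
    (hC : ∀ x ∈ Ioo 0 1, |f' x| ≤ C) {x₀ : ℝ} (hx₀ : x₀ ∈ Icc 0 1) (hfx₀ : f x₀ = 0) :
    ∀ x ∈ Icc 0 1, |f x| ≤ C := by
  have hC₀ : 0 ≤ C := (abs_nonneg _).trans (hC (1 / 2) ⟨by norm_num, by norm_num⟩)
  have hsub_le : ∀ {a b : ℝ}, a ∈ Icc 0 1 → b ∈ Icc 0 1 → a ≤ b → |f b - f a| ≤ C := by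
    intro a b ha hb hab
    have hsub : Icc a b ⊆ Icc 0 1 := Icc_subset_Icc ha.1 hb.2
    calc |f b - f a| ≤ C * (b - a) :=
          abs_sub_le_of_abs_hasDerivAt_le hab (hf.mono hsub)
            (fun x hx => hf' x (Ioo_subset_Ioo ha.1 hb.2 hx))
            (fun x hx => hC x (Ioo_subset_Ioo ha.1 hb.2 hx))
      _ ≤ C * 1 := by gcongr; linarith [ha.1, hb.2]
      _ = C := mul_one C
  intro x hx
  rcases le_total x₀ x with h | h
  · simpa [hfx₀] using hsub_le hx₀ hx h
  · simpa [hfx₀] using hsub_le hx hx₀ h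

theorem eqOn_zero_of_third_order_contraction {w g : ℝ → ℝ} {a b c : ℝ} (hw : ContDiff ℝ 2 w)
    (hw₀ : w 0 = 0) (hw'₀ : deriv w 0 = 0) (hw''₁ : deriv (deriv w) 1 = 0)
    (hg : ∀ t ∈ Ioo 0 1, HasDerivAt (deriv (deriv w)) (g t) t)
    (ha : 0 ≤ a) (hb : 0 ≤ b) (hc : 0 ≤ c) (habc : a + b + c < 1)
    (hg_le : ∀ t ∈ Ioo 0 1,
      |g t| ≤ a * |w t| + b * |deriv w t| + c * |deriv (deriv w) t|) :
    EqOn w 0 (Icc 0 1) := by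
  have hw' : ContDiff ℝ 1 (deriv w) := hw.deriv'
  have hw'' : Continuous (deriv (deriv w)) := hw'.continuous_deriv le_rfl
  obtain ⟨t₀, ht₀, hmax⟩ := isCompact_Icc.exists_isMaxOn (nonempty_Icc.mpr zero_le_one)
    (hw''.abs.continuousOn (s := Icc (0 : ℝ) 1))
  set M := |deriv (deriv w) t₀|
  have hw''_le : ∀ t ∈ Icc 0 1, |deriv (deriv w) t| ≤ M := fun t ht => hmax ht
  have hw'_le : ∀ t ∈ Icc 0 1, |deriv w t| ≤ M :=
    abs_le_of_abs_hasDerivAt_le_of_eq_zero hw'.continuous.continuousOn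
      (fun t _ => ((hw'.differentiable one_ne_zero) t).hasDerivAt)
      (fun t ht => hw''_le t (Ioo_subset_Icc_self ht)) (left_mem_Icc.mpr zero_le_one) hw'₀
  have hw_le : ∀ t ∈ Icc 0 1, |w t| ≤ M :=
    abs_le_of_abs_hasDerivAt_le_of_eq_zero hw.continuous.continuousOn
      (fun t _ => ((hw.differentiable two_ne_zero) t).hasDerivAt)
      (fun t ht => hw'_le t (Ioo_subset_Icc_self ht)) (left_mem_Icc.mpr zero_le_one) hw₀
  have hg_le_M : ∀ t ∈ Ioo 0 1, |g t| ≤ (a + b + c) * M := by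
    intro t ht
    have ht' := Ioo_subset_Icc_self ht
    calc |g t| ≤ a * |w t| + b * |deriv w t| + c * |deriv (deriv w) t| := hg_le t ht
      _ ≤ a * M + b * M + c * M := by
          gcongr
          exacts [hw_le t ht', hw'_le t ht', hw''_le t ht']
      _ = (a + b + c) * M := by ring
  have hM_le : M ≤ (a + b + c) * M :=
    abs_le_of_abs_hasDerivAt_le_of_eq_zero hw''.continuousOn hg hg_le_M
      (right_mem_Icc.mpr zero_le_one) hw''₁ t₀ ht₀
  have hM : M ≤ 0 := by nlinarith [abs_nonneg (deriv (deriv w) t₀)]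
  exact fun t ht => abs_nonpos_iff.mp ((hw_le t ht).trans hM)

noncomputable def odeRhs (t x x' x'' : ℝ) : ℝ :=
  -(1 / 36) * x' ^ 2 + (1 / 24) * x * x'' + t ^ 2 / 4 - 6

theorem abs_odeRhs_sub_le {t x y x' y' x'' y'' : ℝ} (hy : y ∈ Icc 0 2.5)
    (hx' : x' ∈ Icc 0 3.75) (hy' : y' ∈ Icc 0 3.75) (hx'' : |x''| ≤ 7.5) :
    |odeRhs t y y' y'' - odeRhs t x x' x''| ≤
      7.5 / 24 * |y - x| + 7.5 / 36 * |y' - x'| + 2.5 / 24 * |y'' - x''| := by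
  have hsum : |x' + y'| ≤ 7.5 := by
    rw [abs_le]; constructor <;> linarith [hx'.1, hx'.2, hy'.1, hy'.2]
  have hy_abs : |y| ≤ 2.5 := by rw [abs_le]; constructor <;> linarith [hy.1, hy.2]
  calc |odeRhs t y y' y'' - odeRhs t x x' x''|
      = |1 / 24 * (x'' * (y - x)) + -(1 / 36 * ((x' + y') * (y' - x')))
          + 1 / 24 * (y * (y'' - x''))| := by unfold odeRhs; ring_nf
    _ ≤ 1 / 24 * (|x''| * |y - x|) + 1 / 36 * (|x' + y'| * |y' - x'|)
          + 1 / 24 * (|y| * |y'' - x''|) := by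
        refine (abs_add_three _ _ _).trans (le_of_eq ?_)
        simp only [abs_neg, abs_mul, abs_of_pos (by norm_num : (0 : ℝ) < 1 / 24),
          abs_of_pos (by norm_num : (0 : ℝ) < 1 / 36)]
    _ ≤ 1 / 24 * (7.5 * |y - x|) + 1 / 36 * (7.5 * |y' - x'|) + 1 / 24 * (2.5 * |y'' - x''|) := by
        gcongr
    _ = 7.5 / 24 * |y - x| + 7.5 / 36 * |y' - x'| + 2.5 / 24 * |y'' - x''| := by ring

theorem eqOn_of_isSolution_of_inBounds {u v : ℝ → ℝ} (hu : IsSolution u) (hub : InBounds u)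
    (hv : IsSolution v) (hvb : InBounds v) : EqOn v u (Icc 0 1) := by
  obtain ⟨hu₂, hu₃, hu₀, hu'₀, hu''₁⟩ := hu
  obtain ⟨hv₂, hv₃, hv₀, hv'₀, hv''₁⟩ := hv
  have hd₁ : deriv (v - u) = deriv v - deriv u := funext fun t =>
    deriv_sub (hv₂.differentiable two_ne_zero t) (hu₂.differentiable two_ne_zero t)
  have hd₂ : deriv (deriv (v - u)) = deriv (deriv v) - deriv (deriv u) := by
    rw [hd₁]
    exact funext fun t => deriv_sub (hv₂.deriv'.differentiable one_ne_zero t)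
      (hu₂.deriv'.differentiable one_ne_zero t)
  have hw : EqOn (v - u) 0 (Icc 0 1) := by
    refine eqOn_zero_of_third_order_contraction (a := 7.5 / 24) (b := 7.5 / 36) (c := 2.5 / 24)
      (g := fun t => odeRhs t (v t) (deriv v t) (deriv (deriv v) t) -
        odeRhs t (u t) (deriv u t) (deriv (deriv u) t))
      (hv₂.sub hu₂) (by simp [hu₀, hv₀]) (by simp [hd₁, hu'₀, hv'₀])
      (by simp [hd₂, hu''₁, hv''₁]) (fun t ht => ?_) (by norm_num) (by norm_num) (by norm_num)
      (by norm_num) (fun t ht => ?_)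
    · rw [hd₂]
      exact (hv₃ t ht).sub (hu₃ t ht)
    · obtain ⟨-, hu', hu''⟩ := hub t (Ioo_subset_Icc_self ht)
      obtain ⟨hv, hv', -⟩ := hvb t (Ioo_subset_Icc_self ht)
      rw [hd₂, hd₁]
      exact abs_odeRhs_sub_le hv hu' hv' hu''
  exact fun t ht => sub_eq_zero.mp (hw ht)

noncomputable def explicitSolution (t : ℝ) : ℝ := 3 * t ^ 2 - t ^ 3

theorem hasDerivAt_explicitSolution (t : ℝ) :
    HasDerivAt explicitSolution (6 * t - 3 * t ^ 2) t :=
  (((hasDerivAt_pow 2 t).const_mul 3).fun_sub (hasDerivAt_pow 3 t)).congr_deriv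
    (by norm_num; ring)

theorem deriv_explicitSolution : deriv explicitSolution = fun t => 6 * t - 3 * t ^ 2 :=
  funext fun t => (hasDerivAt_explicitSolution t).deriv

theorem hasDerivAt_deriv_explicitSolution (t : ℝ) :
    HasDerivAt (deriv explicitSolution) (6 - 6 * t) t := by
  rw [deriv_explicitSolution]
  exact (((hasDerivAt_id' t).const_mul 6).fun_sub ((hasDerivAt_pow 2 t).const_mul 3)).congr_deriv
    (by norm_num; ring)

theorem deriv_deriv_explicitSolution : deriv (deriv explicitSolution) = fun t => 6 - 6 * t :=
  funext fun t => (hasDerivAt_deriv_explicitSolution t).deriv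

theorem isSolution_explicitSolution : IsSolution explicitSolution := by
  refine ⟨by unfold explicitSolution; fun_prop, fun t _ => ?_, by simp [explicitSolution],
    by simp [deriv_explicitSolution], by simp [deriv_deriv_explicitSolution]⟩
  rw [deriv_deriv_explicitSolution, deriv_explicitSolution]
  exact (((hasDerivAt_id' t).const_mul 6).const_sub 6).congr_deriv
    (by simp only [explicitSolution]; ring)

theorem inBounds_explicitSolution : InBounds explicitSolution := by
  intro t ⟨ht₀, ht₁⟩
  rw [deriv_deriv_explicitSolution, deriv_explicitSolution]
  simp only [explicitSolution, mem_Icc, abs_le]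
  refine ⟨⟨?_, ?_⟩, ⟨?_, ?_⟩, ?_, ?_⟩ <;> nlinarith [mul_nonneg ht₀ ht₀]

theorem example_421 :
    ∃ u : ℝ → ℝ, (IsSolution u ∧ InBounds u) ∧
      ∀ v : ℝ → ℝ, IsSolution v ∧ InBounds v → ∀ t ∈ Set.Icc (0:ℝ) 1, v t = u t :=
  ⟨explicitSolution, ⟨isSolution_explicitSolution, inBounds_explicitSolution⟩,
    fun _ hv _ ht => eqOn_of_isSolution_of_inBounds isSolution_explicitSolution
      inBounds_explicitSolution hv.1 hv.2 ht⟩
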